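/- For the function ℓ^N(x) = C(d)N^{dδ} if |x| < N^{-δ} and ℓ^N(x) = C(d)/|x|^d if |x| ≥ N^{-δ}, and any ρ ∈ L^1 ∩ L^∞(ℝ^d) with ρ ≥ 0, the convolution satisfies ‖ℓ^N ⋆ ρ‖_{L^∞} ≤ C(1 + log N)(‖ρ‖_{L^1} + ‖ρ‖_{L^∞}) for a constant C depending only on d and δ. -/

import Mathlib

/-!
Writing `ℓ^N(z) = C(d) / max(N^{-δ}, |z|)^d`, split the convolution at distance one from `x`.
Near `x`, bound `ρ` by `‖ρ‖_∞` and integrate `ℓ^N` over the unit ball in polar coordinates: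
the plateau `|z| < N^{-δ}` contributes `C(d) |B|`, the shell `N^{-δ} ≤ |z| ≤ 1` contributes
`d δ log N · C(d) |B|`. Away from `x`, `ℓ^N ≤ C(d)`, which gives `C(d) ‖ρ‖_1`.
-/

open MeasureTheory Real Set

noncomputable section

/-- The function `ℓ^N` with constant `Cd`. -/
def ellN (d N : ℕ) (δ Cd : ℝ) (x : EuclideanSpace ℝ (Fin d)) : ℝ :=
  if (N : ℝ) ^ (-δ) ≤ ‖x‖ then Cd / ‖x‖ ^ d else Cd * (N : ℝ) ^ ((d : ℝ) * δ)

open Metric Module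

theorem integral_pow_mul_div_max_pow {n : ℕ} (hn : n ≠ 0) {a : ℝ} (ha : 0 < a) (ha1 : a ≤ 1)
    (c : ℝ) : ∫ r in (0 : ℝ)..1, r ^ (n - 1) * (c / max a r ^ n) = c / n - c * log a := by
  have hcont : Continuous fun r : ℝ => r ^ (n - 1) * (c / max a r ^ n) :=
    (continuous_pow _).mul <| continuous_const.div ((continuous_const.max continuous_id).pow n)
      fun r => pow_ne_zero _ (ha.trans_le (le_max_left a r)).ne'
  have hplateau : ∫ r in (0 : ℝ)..a, r ^ (n - 1) * (c / max a r ^ n) = c / n := by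
    rw [intervalIntegral.integral_congr (g := fun r => r ^ (n - 1) * (c / a ^ n)) fun r hr => by
      rw [max_eq_left (uIcc_of_le ha.le ▸ hr).2]]
    rw [intervalIntegral.integral_mul_const, integral_pow, Nat.sub_add_cancel (by omega),
      Nat.cast_sub (by omega), Nat.cast_one, sub_add_cancel, zero_pow hn, sub_zero]
    field_simp
  have hshell : ∫ r in a..1, r ^ (n - 1) * (c / max a r ^ n) = -(c * log a) := by
    rw [intervalIntegral.integral_congr (g := fun r => c * r⁻¹) fun r hr => by
      obtain ⟨har, -⟩ := uIcc_of_le ha1 ▸ hr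
      have hr0 : 0 < r := ha.trans_le har
      simp only [max_eq_right har, ← pow_sub_one_mul hn r]
      field_simp]
    rw [intervalIntegral.integral_const_mul, integral_inv_of_pos ha one_pos, one_div, log_inv,
      mul_neg]
  rw [← intervalIntegral.integral_add_adjacent_intervals (hcont.intervalIntegrable 0 a)
    (hcont.intervalIntegrable a 1), hplateau, hshell, sub_eq_add_neg]

theorem integral_closedBall_div_max_pow {E : Type*} [NormedAddCommGroup E] [NormedSpace ℝ E]
    [FiniteDimensional ℝ E] [Nontrivial E] [MeasurableSpace E] [BorelSpace E] (μ : Measure E)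
    [μ.IsAddHaarMeasure] {a : ℝ} (ha : 0 < a) (ha1 : a ≤ 1) (c : ℝ) :
    ∫ z in closedBall (0 : E) 1, c / max a ‖z‖ ^ finrank ℝ E ∂μ
      = μ.real (ball 0 1) * c * (1 - finrank ℝ E * log a) := by
  have hn : finrank ℝ E ≠ 0 := finrank_pos.ne'
  have hradial : (closedBall (0 : E) 1).indicator (fun z => c / max a ‖z‖ ^ finrank ℝ E)
      = fun z => (Iic 1).indicator (fun r => c / max a r ^ finrank ℝ E) ‖z‖ := by
    ext z
    simp only [indicator, mem_closedBall_zero_iff, mem_Iic]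
  rw [← integral_indicator measurableSet_closedBall, hradial, integral_fun_norm_addHaar μ]
  have hsmul : ∀ y : ℝ,
      y ^ (finrank ℝ E - 1) • (Iic 1).indicator (fun r => c / max a r ^ finrank ℝ E) y
        = (Iic 1).indicator (fun r => r ^ (finrank ℝ E - 1) • (c / max a r ^ finrank ℝ E)) y :=
    fun y => (indicator_smul_apply (Iic 1) (fun r : ℝ => r ^ (finrank ℝ E - 1)) _ y).symm
  simp_rw [hsmul]
  rw [setIntegral_indicator measurableSet_Iic, Ioi_inter_Iic,
    ← intervalIntegral.integral_of_le zero_le_one]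
  simp only [smul_eq_mul]
  rw [integral_pow_mul_div_max_pow hn ha ha1, nsmul_eq_mul]
  field_simp

theorem integral_kernel_mul_le {E : Type*} [NormedAddCommGroup E] [MeasurableSpace E]
    [BorelSpace E] {μ : Measure E} [μ.IsAddLeftInvariant] [μ.IsNegInvariant] {K ρ : E → ℝ}
    {r k : ℝ} (hK0 : ∀ z, 0 ≤ K z) (hK : IntegrableOn K (closedBall 0 r) μ)
    (hKfar : ∀ z, r < ‖z‖ → K z ≤ k) (hk : 0 ≤ k) (hρ0 : 0 ≤ᵐ[μ] ρ) (hρ1 : MemLp ρ 1 μ)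
    (hρ_top : MemLp ρ ⊤ μ) (x : E) :
    ∫ y, K (x - y) * ρ y ∂μ ≤
      lpNorm ρ ⊤ μ * ∫ z in closedBall 0 r, K z ∂μ + k * lpNorm ρ 1 μ := by
  set S := lpNorm ρ ⊤ μ
  have hρS : ∀ᵐ y ∂μ, ρ y ≤ S :=
    (ae_le_lpNorm_exponent_top hρ_top).mono fun y hy => (le_abs_self _).trans hy
  have hρ : Integrable ρ μ := memLp_one_iff_integrable.mp hρ1
  have hnear : Integrable ((closedBall 0 r).indicator K) μ :=
    hK.integrable_indicator measurableSet_closedBall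
  have hbound : Integrable (fun y => S * (closedBall 0 r).indicator K (x - y) + k * ρ y) μ :=
    ((hnear.comp_sub_left x).const_mul S).add (hρ.const_mul k)
  have hρ_integral : ∫ y, ρ y ∂μ = lpNorm ρ 1 μ := by
    rw [lpNorm_one_eq_integral_norm hρ1.1]
    exact integral_congr_ae (hρ0.mono fun y hy => (abs_of_nonneg hy).symm)
  calc ∫ y, K (x - y) * ρ y ∂μ
      ≤ ∫ y, (S * (closedBall 0 r).indicator K (x - y) + k * ρ y) ∂μ := by
        refine integral_mono_of_nonneg (hρ0.mono fun y hy => mul_nonneg (hK0 _) hy) hbound ?_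
        filter_upwards [hρS, hρ0] with y hyS hy0
        by_cases hy : x - y ∈ closedBall 0 r
        · rw [indicator_of_mem hy, mul_comm S]
          nlinarith [mul_le_mul_of_nonneg_left hyS (hK0 (x - y)), mul_nonneg hk hy0]
        · rw [indicator_of_notMem hy, mul_zero, zero_add]
          exact mul_le_mul_of_nonneg_right (hKfar _ (by simpa using hy)) hy0
    _ = S * ∫ z in closedBall 0 r, K z ∂μ + k * lpNorm ρ 1 μ := by
        rw [integral_add ((hnear.comp_sub_left x).const_mul S) (hρ.const_mul k),
          integral_const_mul, integral_const_mul, integral_sub_left_eq_self _ μ x,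
          integral_indicator measurableSet_closedBall, hρ_integral]

section ellN

variable {d N : ℕ} {δ Cd : ℝ}

theorem ellN_eq_div_max_pow (x : EuclideanSpace ℝ (Fin d)) :
    ellN d N δ Cd x = Cd / max ((N : ℝ) ^ (-δ)) ‖x‖ ^ d := by
  unfold ellN
  split_ifs with h
  · rw [max_eq_right h]
  · rw [max_eq_left (not_le.mp h).le, ← rpow_natCast, ← rpow_mul N.cast_nonneg, neg_mul,
      rpow_neg N.cast_nonneg, div_inv_eq_mul, mul_comm δ]

theorem ellN_nonneg (hCd : 0 ≤ Cd) (x : EuclideanSpace ℝ (Fin d)) : 0 ≤ ellN d N δ Cd x := by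
  rw [ellN_eq_div_max_pow]
  positivity

theorem ellN_le_of_one_lt_norm (hCd : 0 ≤ Cd) {x : EuclideanSpace ℝ (Fin d)} (hx : 1 < ‖x‖) :
    ellN d N δ Cd x ≤ Cd := by
  rw [ellN_eq_div_max_pow]
  exact div_le_self hCd (one_le_pow₀ (hx.le.trans (le_max_right _ _)))

theorem continuous_ellN (hN : N ≠ 0) : Continuous (ellN d N δ Cd) := by
  have ha : 0 < (N : ℝ) ^ (-δ) := rpow_pos_of_pos (by positivity) _
  simp_rw [funext ellN_eq_div_max_pow]
  exact continuous_const.div ((continuous_const.max continuous_norm).pow d)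
    fun x => pow_ne_zero _ (ha.trans_le (le_max_left _ _)).ne'

theorem integral_closedBall_ellN (hd : d ≠ 0) (hN : 1 ≤ N) (hδ : 0 ≤ δ) :
    ∫ z in closedBall (0 : EuclideanSpace ℝ (Fin d)) 1, ellN d N δ Cd z
      = volume.real (ball (0 : EuclideanSpace ℝ (Fin d)) 1) * Cd * (1 + d * δ * log N) := by
  have : Nontrivial (EuclideanSpace ℝ (Fin d)) := by
    have : Nonempty (Fin d) := ⟨⟨0, Nat.pos_of_ne_zero hd⟩⟩
    infer_instance
  have hN1 : (1 : ℝ) ≤ N := by exact_mod_cast hN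
  have h := integral_closedBall_div_max_pow (volume : Measure (EuclideanSpace ℝ (Fin d)))
    (rpow_pos_of_pos (zero_lt_one.trans_le hN1) (-δ)) (rpow_le_one_of_one_le_of_nonpos hN1
    (neg_nonpos.mpr hδ)) Cd
  rw [finrank_euclideanSpace_fin, log_rpow (zero_lt_one.trans_le hN1)] at h
  simp_rw [ellN_eq_div_max_pow, h]
  ring

end ellN

theorem ellN_convolution_bound (d : ℕ) (hd : 2 ≤ d) (δ Cd : ℝ) (hδ : 0 < δ) (hCd : 0 < Cd) :
    ∃ C > 0, ∀ N : ℕ, 2 ≤ N → ∀ ρ : EuclideanSpace ℝ (Fin d) → ℝ,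
      (∀ y, 0 ≤ ρ y) → MemLp ρ 1 volume → MemLp ρ ⊤ volume →
      ∀ x, ∫ y, ellN d N δ Cd (x - y) * ρ y ≤
        C * (1 + Real.log N) * ((eLpNorm ρ 1 volume).toReal + (eLpNorm ρ ⊤ volume).toReal) := by
  set V := volume.real (ball (0 : EuclideanSpace ℝ (Fin d)) 1) with hV_def
  refine ⟨V * Cd * (1 + d * δ) + Cd, by positivity, fun N hN ρ hρ0 hρ1 hρ_top x => ?_⟩
  have hsplit := integral_kernel_mul_le (K := ellN d N δ Cd) (ellN_nonneg hCd.le)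
    ((continuous_ellN (by omega)).continuousOn.integrableOn_compact (isCompact_closedBall 0 1))
    (fun _ => ellN_le_of_one_lt_norm hCd.le) hCd.le (ae_of_all _ hρ0) hρ1 hρ_top x
  rw [integral_closedBall_ellN (by omega) (by omega) hδ.le, ← hV_def] at hsplit
  rw [toReal_eLpNorm hρ1.1, toReal_eLpNorm hρ_top.1]
  have hlog : 0 ≤ log N := log_nonneg (by exact_mod_cast one_le_two.trans hN)
  have hV : 0 ≤ V := measureReal_nonneg
  have hL1 : 0 ≤ lpNorm ρ 1 volume := lpNorm_nonneg
  have hL_top : 0 ≤ lpNorm ρ ⊤ volume := lpNorm_nonneg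
  refine hsplit.trans ?_
  have hdδ : 0 ≤ (d : ℝ) * δ := by positivity
  have hfactor : 1 + d * δ * log N ≤ (1 + d * δ) * (1 + log N) := by
    nlinarith [mul_nonneg hdδ hlog]
  nlinarith [mul_le_mul_of_nonneg_left hfactor (by positivity : 0 ≤ lpNorm ρ ⊤ volume * (V * Cd)),
    mul_nonneg (mul_nonneg (mul_nonneg hV hCd.le) (add_nonneg zero_le_one hdδ))
      (mul_nonneg (add_nonneg zero_le_one hlog) hL1),
    mul_nonneg (mul_nonneg hCd.le hL1) hlog, mul_nonneg (mul_nonneg hCd.le hL_top) hlog]
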